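/- Let P = p1→p2→⋯→p_ℓ be a forward-induced directed path in an oriented graph D, let γ be an integer with χ⃗(N(v)) ≤ γ for each v ∈ V(P), and let W^p and W^a be defined with respect to P. Then: (1) if D is P⃗4-free, χ⃗(W^p) ≤ 2γ; (2) if D is A⃗4-free, χ⃗(W^a) ≤ 2γ. -/

import Mathlib

namespace DichiP4

variable {V : Type*}

/-- An oriented graph: an arc relation with no digons (hence also no loops). -/
def Oriented (A : V → V → Prop) : Prop := ∀ u v, A u v → ¬ A v u

/-- Adjacency in the underlying (undirected) graph. -/
def Adj (A : V → V → Prop) (u v : V) : Prop := A u v ∨ A v u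

/-- The neighborhood `N(v)` of a vertex in the underlying graph. -/
def nbr (A : V → V → Prop) (v : V) : Set V := {w | Adj A v w}

/-- `N(S)`: the neighborhood of a set of vertices. -/
def nbrSet (A : V → V → Prop) (S : Set V) : Set V := (⋃ v ∈ S, nbr A v) \ S

/-- `N[S]`: the closed neighborhood of a set of vertices. -/
def cnbrSet (A : V → V → Prop) (S : Set V) : Set V := ⋃ v ∈ S, insert v (nbr A v)

/-- A clique in the underlying graph (= the vertex set of a tournament). -/
def IsClique (A : V → V → Prop) (K : Set V) : Prop :=
  ∀ u ∈ K, ∀ v ∈ K, u ≠ v → Adj A u v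

/-- The clique number `ω(D)` of the underlying graph. -/
noncomputable def cliqueNum (A : V → V → Prop) : ℕ :=
  sSup {n | ∃ K : Set V, IsClique A K ∧ K.Finite ∧ K.ncard = n}

/-- The set `s` induces an acyclic subdigraph (no directed cycle within `s`). -/
def AcyclicOn (A : V → V → Prop) (s : Set V) : Prop :=
  ∀ v, ¬ Relation.TransGen (fun x y => x ∈ s ∧ y ∈ s ∧ A x y) v v

/-- The set `s` admits a dicoloring with `k` colors: every color class induces an
acyclic subdigraph. -/
def DicolorableOn (A : V → V → Prop) (s : Set V) (k : ℕ) : Prop :=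
  ∃ c : V → ℕ, (∀ v ∈ s, c v < k) ∧ ∀ i : ℕ, AcyclicOn A {v | v ∈ s ∧ c v = i}

/-- The dichromatic number `χ⃗(s)` of the subdigraph induced by `s`. -/
noncomputable def dichi (A : V → V → Prop) (s : Set V) : ℕ :=
  sInf {k | DicolorableOn A s k}

/-- `A` has an induced subdigraph isomorphic to `B`. -/
def HasInducedCopy {W : Type*} (A : V → V → Prop) (B : W → W → Prop) : Prop :=
  ∃ f : W → V, Function.Injective f ∧ ∀ x y : W, B x y ↔ A (f x) (f y)

/-- `A` is `B`-free: no induced subdigraph of `A` is isomorphic to `B`. -/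
def Free {W : Type*} (A : V → V → Prop) (B : W → W → Prop) : Prop :=
  ¬ HasInducedCopy A B

/-- `P⃗4`: the orientation of the path `0 – 1 – 2 – 3` with arcs `0→1, 1→2, 2→3`. -/
def P4vec : Fin 4 → Fin 4 → Prop := fun x y =>
  (x = 0 ∧ y = 1) ∨ (x = 1 ∧ y = 2) ∨ (x = 2 ∧ y = 3)

/-- `A⃗4`: the orientation of the path `0 – 1 – 2 – 3` with arcs `1→0, 1→2, 3→2`. -/
def A4vec : Fin 4 → Fin 4 → Prop := fun x y =>
  (x = 1 ∧ y = 0) ∨ (x = 1 ∧ y = 2) ∨ (x = 3 ∧ y = 2)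

/-- `Q⃗4`: the orientation of the path `0 – 1 – 2 – 3` with arcs `0→1, 2→1, 3→2`. -/
def Q4vec : Fin 4 → Fin 4 → Prop := fun x y =>
  (x = 0 ∧ y = 1) ∨ (x = 2 ∧ y = 1) ∨ (x = 3 ∧ y = 2)

/-- `Q⃗4'`: the orientation of the path `0 – 1 – 2 – 3` with arcs `1→0, 2→1, 2→3`. -/
def Q4'vec : Fin 4 → Fin 4 → Prop := fun x y =>
  (x = 1 ∧ y = 0) ∨ (x = 2 ∧ y = 1) ∨ (x = 2 ∧ y = 3)

/-- `B` is an orientation of the path on four vertices `0 – 1 – 2 – 3`. -/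
def IsP4Orientation (B : Fin 4 → Fin 4 → Prop) : Prop :=
  Oriented B ∧ ∀ x y : Fin 4, Adj B x y ↔ ((x : ℕ) + 1 = (y : ℕ) ∨ (y : ℕ) + 1 = (x : ℕ))

/-- `p 1 → p 2 → ⋯ → p ℓ` is a directed path in `A` (distinct vertices). -/
def IsDirPath (A : V → V → Prop) (ℓ : ℕ) (p : ℕ → V) : Prop :=
  1 ≤ ℓ ∧ Set.InjOn p (Set.Icc 1 ℓ) ∧ ∀ i, 1 ≤ i → i < ℓ → A (p i) (p (i + 1))

/-- A directed path `p 1 → ⋯ → p ℓ` is forward-induced: no arc `(p i, p j)` with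
`j > i + 1`. -/
def ForwardInduced (A : V → V → Prop) (ℓ : ℕ) (p : ℕ → V) : Prop :=
  ∀ i j, 1 ≤ i → j ≤ ℓ → i + 1 < j → ¬ A (p i) (p j)

/-- `p 1 → ⋯ → p ℓ` is a shortest directed path from `p 1` to `p ℓ`. -/
def IsShortestDirPath (A : V → V → Prop) (ℓ : ℕ) (p : ℕ → V) : Prop :=
  IsDirPath A ℓ p ∧
    ∀ (m : ℕ) (q : ℕ → V), IsDirPath A m q → q 1 = p 1 → q m = p ℓ → ℓ ≤ m

/-- The vertex set `V(P)` of the path `p 1, …, p ℓ`. -/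
def pathSet (ℓ : ℕ) (p : ℕ → V) : Set V := p '' Set.Icc 1 ℓ

/-- `N(P)`: the neighborhood of the vertex set of the path. -/
def pathNbrs (A : V → V → Prop) (ℓ : ℕ) (p : ℕ → V) : Set V := nbrSet A (pathSet ℓ p)

/-- `F i`: vertices of `N(P)` whose first neighbor on the path is `p i`. -/
def Fatt (A : V → V → Prop) (ℓ : ℕ) (p : ℕ → V) (i : ℕ) : Set V :=
  {v ∈ pathNbrs A ℓ p | Adj A v (p i) ∧ ∀ i', 1 ≤ i' → i' < i → ¬ Adj A v (p i')}

/-- `L j`: vertices of `N(P)` whose last neighbor on the path is `p j`. -/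
def Latt (A : V → V → Prop) (ℓ : ℕ) (p : ℕ → V) (j : ℕ) : Set V :=
  {v ∈ pathNbrs A ℓ p | Adj A v (p j) ∧ ∀ j', j < j' → j' ≤ ℓ → ¬ Adj A v (p j')}

/-- `F i ⁺`: in-neighbors of `p i` in `F i`. -/
def FattP (A : V → V → Prop) (ℓ : ℕ) (p : ℕ → V) (i : ℕ) : Set V :=
  {v ∈ Fatt A ℓ p i | A v (p i)}

/-- `F i ⁻`: out-neighbors of `p i` in `F i`. -/
def FattM (A : V → V → Prop) (ℓ : ℕ) (p : ℕ → V) (i : ℕ) : Set V :=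
  {v ∈ Fatt A ℓ p i | A (p i) v}

/-- `L j ⁺`: in-neighbors of `p j` in `L j`. -/
def LattP (A : V → V → Prop) (ℓ : ℕ) (p : ℕ → V) (j : ℕ) : Set V :=
  {v ∈ Latt A ℓ p j | A v (p j)}

/-- `L j ⁻`: out-neighbors of `p j` in `L j`. -/
def LattM (A : V → V → Prop) (ℓ : ℕ) (p : ℕ → V) (j : ℕ) : Set V :=
  {v ∈ Latt A ℓ p j | A (p j) v}

/-- `W^p = (F₂⁻ ∪ ⋯ ∪ F_{ℓ-1}⁻) ∪ (L₂⁺ ∪ ⋯ ∪ L_{ℓ-1}⁺)`. -/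
def Wp (A : V → V → Prop) (ℓ : ℕ) (p : ℕ → V) : Set V :=
  (⋃ i ∈ Set.Icc 2 (ℓ - 1), FattM A ℓ p i) ∪ ⋃ i ∈ Set.Icc 2 (ℓ - 1), LattP A ℓ p i

/-- `W^a = (F₂⁺ ∪ ⋯ ∪ F_{ℓ-1}⁺) ∪ (L₂⁻ ∪ ⋯ ∪ L_{ℓ-1}⁻)`. -/
def Wa (A : V → V → Prop) (ℓ : ℕ) (p : ℕ → V) : Set V :=
  (⋃ i ∈ Set.Icc 2 (ℓ - 1), FattP A ℓ p i) ∪ ⋃ i ∈ Set.Icc 2 (ℓ - 1), LattM A ℓ p i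

/-- `R^p = N(P) \ (N({p1, p2, pℓ}) ∪ W^p)`. -/
def Rp (A : V → V → Prop) (ℓ : ℕ) (p : ℕ → V) : Set V :=
  pathNbrs A ℓ p \ (nbrSet A {p 1, p 2, p ℓ} ∪ Wp A ℓ p)

/-- `R^a = N(P) \ (N({p1, pℓ}) ∪ W^a)`. -/
def Ra (A : V → V → Prop) (ℓ : ℕ) (p : ℕ → V) : Set V :=
  pathNbrs A ℓ p \ (nbrSet A {p 1, p ℓ} ∪ Wa A ℓ p)

/-- A dipolar set: a nonempty set `S` partitioned into `S⁺` (no out-neighbor outside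
`S`) and `S⁻` (no in-neighbor outside `S`). -/
def IsDipolar (A : V → V → Prop) (S : Set V) : Prop :=
  S.Nonempty ∧ ∃ Sp Sm : Set V, Sp ∪ Sm = S ∧ Disjoint Sp Sm ∧
    (∀ v ∈ Sp, ∀ w, w ∉ S → ¬ A v w) ∧ ∀ v ∈ Sm, ∀ w, w ∉ S → ¬ A w v

/-- Reachability by a directed path staying inside `s`. -/
def ReachIn (A : V → V → Prop) (s : Set V) (u v : V) : Prop :=
  Relation.ReflTransGen (fun x y => x ∈ s ∧ y ∈ s ∧ A x y) u v

/-- A digraph is strongly connected. -/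
def StronglyConnected (A : V → V → Prop) : Prop :=
  ∀ u v : V, Relation.ReflTransGen A u v

/-- `t` is a strongly connected component of the subdigraph induced by `s`. -/
def IsSCCOf (A : V → V → Prop) (s t : Set V) : Prop :=
  t ⊆ s ∧ t.Nonempty ∧ (∀ u ∈ t, ∀ v ∈ t, ReachIn A s u v) ∧
    ∀ u ∈ t, ∀ v ∈ s, ReachIn A s u v → ReachIn A s v u → v ∈ t

/-- A source strongly connected component: all arcs between it and the rest of `s`
begin in it. -/
def IsSourceSCC (A : V → V → Prop) (s t : Set V) : Prop :=
  IsSCCOf A s t ∧ ∀ u ∈ s, ∀ v ∈ t, A u v → u ∈ t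

/-- A sink strongly connected component: all arcs between it and the rest of `s`
end in it. -/
def IsSinkSCC (A : V → V → Prop) (s t : Set V) : Prop :=
  IsSCCOf A s t ∧ ∀ u ∈ t, ∀ v ∈ s, A u v → v ∈ t

/-- `K` (a tournament of maximum order) and the directed path `p 1 → ⋯ → p ℓ`
(from a source SCC of `D[K]` to a sink SCC of `D[K]`) form a closed tournament
`C = K ∪ V(P)`. -/
def FormsClosedTournament (A : V → V → Prop) (K : Set V) (ℓ : ℕ) (p : ℕ → V) : Prop :=
  IsClique A K ∧ K.Finite ∧ K.ncard = cliqueNum A ∧ IsDirPath A ℓ p ∧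
    (∃ t, IsSourceSCC A K t ∧ p 1 ∈ t) ∧ ∃ t, IsSinkSCC A K t ∧ p ℓ ∈ t

/-- `K` and `P` form a path-minimizing closed tournament: `|P|` is minimum among
all pairs forming a closed tournament. -/
def FormsPathMinClosedTournament (A : V → V → Prop) (K : Set V) (ℓ : ℕ) (p : ℕ → V) :
    Prop :=
  FormsClosedTournament A K ℓ p ∧
    ∀ (K' : Set V) (ℓ' : ℕ) (p' : ℕ → V), FormsClosedTournament A K' ℓ' p' → ℓ ≤ ℓ'

/-- The strong neighborhood of `S`: neighbors of `S` having both an in-neighbor and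
an out-neighbor in `S`. -/
def strongNbrs (A : V → V → Prop) (S : Set V) : Set V :=
  {v ∈ nbrSet A S | (∃ u ∈ S, A u v) ∧ ∃ u ∈ S, A v u}

/-! Colour each block `F i ⁻` (resp. `L i ⁺`) with the `γ` colours of `N(p i)`. In a
`P⃗4`-free digraph there is no arc from `F i ⁻` to `F j` nor from `L i` to `L j ⁺` for
`i < j`: together with one arc of the path it would form an induced `P⃗4`. Hence a directed
cycle with all its vertices in one colour class lies in a single block, and the two
families `F ⁻` and `L ⁺` together need at most `2γ` colours. For `W^a` the same argument
produces an induced `A⃗4` instead. -/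

section

variable {A : V → V → Prop}

theorem Oriented.irrefl (hA : Oriented A) (v : V) : ¬ A v v := fun h => hA v v h h

theorem Adj.symm {u v : V} (h : Adj A u v) : Adj A v u := Or.symm h

theorem AcyclicOn.subset {s t : Set V} (ht : AcyclicOn A t) (hst : s ⊆ t) : AcyclicOn A s :=
  fun v hv => ht v (Relation.TransGen.mono (fun _ _ h => ⟨hst h.1, hst h.2.1, h.2.2⟩) _ _ hv)

theorem DicolorableOn.subset {s t : Set V} {k : ℕ} (ht : DicolorableOn A t k) (hst : s ⊆ t) :
    DicolorableOn A s k := by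
  obtain ⟨c, hlt, hacyc⟩ := ht
  exact ⟨c, fun v hv => hlt v (hst hv), fun i => (hacyc i).subset fun v hv => ⟨hst hv.1, hv.2⟩⟩

theorem DicolorableOn.mono {s : Set V} {k k' : ℕ} (h : DicolorableOn A s k) (hkk' : k ≤ k') :
    DicolorableOn A s k' := by
  obtain ⟨c, hlt, hacyc⟩ := h
  exact ⟨c, fun v hv => (hlt v hv).trans_le hkk', hacyc⟩

theorem dicolorableOn_card [Fintype V] (hA : Oriented A) (s : Set V) :
    DicolorableOn A s (Fintype.card V) := by
  refine ⟨fun v => Fintype.equivFin V v, fun v _ => (Fintype.equivFin V v).isLt, ?_⟩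
  intro i v hcyc
  obtain ⟨w, ⟨hv, hw, hvw⟩, -⟩ := Relation.TransGen.head'_iff.1 hcyc
  have : v = w := (Fintype.equivFin V).injective (Fin.ext (hv.2.trans hw.2.symm))
  exact hA.irrefl w (this ▸ hvw)

theorem dicolorableOn_of_dichi_le [Fintype V] (hA : Oriented A) {s : Set V} {k : ℕ}
    (h : dichi A s ≤ k) : DicolorableOn A s k :=
  DicolorableOn.mono (Nat.sInf_mem (s := {k | DicolorableOn A s k})
    ⟨_, dicolorableOn_card hA s⟩) h

theorem DicolorableOn.union {s t : Set V} {k : ℕ} (hs : DicolorableOn A s k)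
    (ht : DicolorableOn A t k) : DicolorableOn A (s ∪ t) (2 * k) := by
  classical
  obtain ⟨c, hcs, hacycs⟩ := hs
  obtain ⟨d, hdt, hacyct⟩ := ht
  refine ⟨fun v => if v ∈ s then c v else k + d v, ?_, fun m => ?_⟩
  · intro v hv
    by_cases h : v ∈ s
    · simp only [if_pos h]; linarith [hcs v h]
    · simp only [if_neg h]; linarith [hdt v (hv.resolve_left h)]
  rcases lt_or_ge m k with hm | hm
  · refine (hacycs m).subset fun v ⟨_, hv⟩ => ?_
    by_cases h : v ∈ s
    · simp_all
    · simp only [if_neg h] at hv; omega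
  · refine (hacyct (m - k)).subset fun v ⟨hvst, hv⟩ => ?_
    by_cases h : v ∈ s
    · simp only [if_pos h] at hv; linarith [hcs v h]
    · simp only [if_neg h] at hv; exact ⟨hvst.resolve_left h, by omega⟩

theorem le_of_transGen_antitone {ι : Type*} [Preorder ι] {r : V → V → Prop} {φ : V → ι}
    (hφ : ∀ x y, r x y → φ y ≤ φ x) {x y : V} (h : Relation.TransGen r x y) : φ y ≤ φ x := by
  induction h with
  | single hxy => exact hφ _ _ hxy
  | tail _ hyz ih => exact (hφ _ _ hyz).trans ih

theorem transGen_fiber_of_antitone {ι : Type*} [PartialOrder ι] {r : V → V → Prop} {φ : V → ι}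
    (hφ : ∀ x y, r x y → φ y ≤ φ x) {x y : V} (h : Relation.TransGen r x y) (hxy : φ x ≤ φ y) :
    Relation.TransGen (fun a b => r a b ∧ φ a = φ x ∧ φ b = φ x) x y := by
  induction h with
  | single hxy' => exact .single ⟨hxy', rfl, (hxy.antisymm (hφ _ _ hxy')).symm⟩
  | @tail w z hxw hwz ih =>
    have hwx := le_of_transGen_antitone hφ hxw
    have hzw := hφ _ _ hwz
    have hw : φ w = φ x := hwx.antisymm (hxy.trans hzw)
    exact (ih (hw ▸ le_rfl)).tail ⟨hwz, hw, (hzw.trans hwx).antisymm hxy⟩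

/-- Every directed cycle inside a colour class stays in a single block `T i`, since the
block index cannot increase along an arc. -/
theorem dicolorableOn_biUnion {ι : Type*} [LinearOrder ι] [Nonempty ι] {I : Set ι}
    {T : ι → Set V} {k : ℕ} (hT : ∀ i ∈ I, DicolorableOn A (T i) k)
    (hback : ∀ i ∈ I, ∀ j ∈ I, i < j → ∀ u ∈ T i, ∀ v ∈ T j, ¬ A u v) :
    DicolorableOn A (⋃ i ∈ I, T i) k := by
  choose! col hcol_lt hcol_acyc using hT
  have hidx : ∀ v ∈ ⋃ i ∈ I, T i, ∃ i ∈ I, v ∈ T i := fun v hv => by simpa using hv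
  choose! idx hidxI hidxT using hidx
  refine ⟨fun v => col (idx v) v, fun v hv => hcol_lt _ (hidxI v hv) v (hidxT v hv), ?_⟩
  intro m v hcyc
  have hstep : ∀ x y, (x ∈ {w | w ∈ ⋃ i ∈ I, T i ∧ col (idx w) w = m} ∧
      y ∈ {w | w ∈ ⋃ i ∈ I, T i ∧ col (idx w) w = m} ∧ A x y) → idx y ≤ idx x :=
    fun x y ⟨hx, hy, hxy⟩ => not_lt.1 fun hlt =>
      hback _ (hidxI x hx.1) _ (hidxI y hy.1) hlt x (hidxT x hx.1) y (hidxT y hy.1) hxy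
  have hvS : v ∈ ⋃ i ∈ I, T i := by
    cases hcyc with
    | single h => exact h.1.1
    | tail _ h => exact h.2.1.1
  refine hcol_acyc _ (hidxI v hvS) m v (Relation.TransGen.mono ?_ _ _
    (transGen_fiber_of_antitone hstep hcyc le_rfl))
  rintro x y ⟨⟨hx, hy, hxy⟩, hix, hiy⟩
  exact ⟨⟨hix ▸ hidxT x hx.1, hix ▸ hx.2⟩, ⟨hiy ▸ hidxT y hy.1, hiy ▸ hy.2⟩, hxy⟩

theorem hasInducedCopy_P4vec (hA : Oriented A) {a b c d : V} (hab : A a b) (hbc : A b c)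
    (hcd : A c d) (hac : ¬ Adj A a c) (had : ¬ Adj A a d) (hbd : ¬ Adj A b d) :
    HasInducedCopy A P4vec := by
  have ha := hA.irrefl a; have hb := hA.irrefl b; have hc := hA.irrefl c; have hd := hA.irrefl d
  have hba := hA _ _ hab; have hcb := hA _ _ hbc; have hdc := hA _ _ hcd
  -- distinctness is forced: any coincidence creates a digon or a forbidden adjacency
  have hac' : a ≠ c := by rintro rfl; exact hba hbc
  have had' : a ≠ d := by rintro rfl; exact hac (Or.inr hcd)
  have hbd' : b ≠ d := by rintro rfl; exact hcb hcd
  simp only [Adj, not_or] at hac had hbd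
  refine ⟨![a, b, c, d], fun x y h => ?_, fun x y => ?_⟩
  · fin_cases x <;> fin_cases y <;> simp_all [eq_comm]
  · fin_cases x <;> fin_cases y <;> simp_all [P4vec]

theorem hasInducedCopy_A4vec (hA : Oriented A) {a b c d : V} (hba : A b a) (hbc : A b c)
    (hdc : A d c) (hac : ¬ Adj A a c) (had : ¬ Adj A a d) (hbd : ¬ Adj A b d) :
    HasInducedCopy A A4vec := by
  have ha := hA.irrefl a; have hb := hA.irrefl b; have hc := hA.irrefl c; have hd := hA.irrefl d
  have hab := hA _ _ hba; have hcb := hA _ _ hbc; have hcd := hA _ _ hdc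
  have hac' : a ≠ c := by rintro rfl; exact had (Or.inr hdc)
  have had' : a ≠ d := by rintro rfl; exact hac (Or.inl hdc)
  have hbd' : b ≠ d := by rintro rfl; exact had (Or.inr hba)
  simp only [Adj, not_or] at hac had hbd
  refine ⟨![a, b, c, d], fun x y h => ?_, fun x y => ?_⟩
  · fin_cases x <;> fin_cases y <;> simp_all [eq_comm]
  · fin_cases x <;> fin_cases y <;> simp_all [A4vec]

variable {ℓ : ℕ} {p : ℕ → V}

theorem IsDirPath.arc_pred (hp : IsDirPath A ℓ p) {i : ℕ} (hi : 2 ≤ i) (hiℓ : i ≤ ℓ) :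
    A (p (i - 1)) (p i) := by
  simpa [Nat.sub_add_cancel (by omega : 1 ≤ i)] using hp.2.2 (i - 1) (by omega) (by omega)

theorem Fatt_subset_nbr (i : ℕ) : Fatt A ℓ p i ⊆ nbr A (p i) := fun _ hv => hv.2.1.symm

theorem Latt_subset_nbr (j : ℕ) : Latt A ℓ p j ⊆ nbr A (p j) := fun _ hv => hv.2.1.symm

/-- Otherwise `p (i-1) → p i → u → v` is an induced `P⃗4`. -/
theorem not_arc_of_mem_FattM_of_mem_Fatt (hA : Oriented A) (hp : IsDirPath A ℓ p)
    (hfree : Free A P4vec) {i j : ℕ} (hi : 2 ≤ i) (hiℓ : i ≤ ℓ) (hij : i < j) {u v : V}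
    (hu : u ∈ FattM A ℓ p i) (hv : v ∈ Fatt A ℓ p j) : ¬ A u v := fun huv =>
  hfree <| hasInducedCopy_P4vec hA (hp.arc_pred hi hiℓ) hu.2 huv
    (mt Adj.symm (hu.1.2.2 (i - 1) (by omega) (by omega)))
    (mt Adj.symm (hv.2.2 (i - 1) (by omega) (by omega)))
    (mt Adj.symm (hv.2.2 i (by omega) hij))

/-- Otherwise `u → v → p j → p (j+1)` is an induced `P⃗4`. -/
theorem not_arc_of_mem_Latt_of_mem_LattP (hA : Oriented A) (hp : IsDirPath A ℓ p)
    (hfree : Free A P4vec) {k j : ℕ} (hkj : k < j) (hjℓ : j < ℓ) {u v : V}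
    (hu : u ∈ Latt A ℓ p k) (hv : v ∈ LattP A ℓ p j) : ¬ A u v := fun huv =>
  hfree <| hasInducedCopy_P4vec hA huv hv.2 (hp.2.2 j (by omega) hjℓ)
    (hu.2.2 j hkj hjℓ.le) (hu.2.2 (j + 1) (by omega) hjℓ) (hv.1.2.2 (j + 1) (by omega) hjℓ)

/-- Otherwise `v ← u → p i ← p (i-1)` is an induced `A⃗4`. -/
theorem not_arc_of_mem_FattP_of_mem_Fatt (hA : Oriented A) (hp : IsDirPath A ℓ p)
    (hfree : Free A A4vec) {i j : ℕ} (hi : 2 ≤ i) (hiℓ : i ≤ ℓ) (hij : i < j) {u v : V}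
    (hu : u ∈ FattP A ℓ p i) (hv : v ∈ Fatt A ℓ p j) : ¬ A u v := fun huv =>
  hfree <| hasInducedCopy_A4vec hA huv hu.2 (hp.arc_pred hi hiℓ)
    (hv.2.2 i (by omega) hij) (hv.2.2 (i - 1) (by omega) (by omega))
    (hu.1.2.2 (i - 1) (by omega) (by omega))

/-- Otherwise `p (j+1) ← p j → v ← u` is an induced `A⃗4`. -/
theorem not_arc_of_mem_Latt_of_mem_LattM (hA : Oriented A) (hp : IsDirPath A ℓ p)
    (hfree : Free A A4vec) {k j : ℕ} (hkj : k < j) (hjℓ : j < ℓ) {u v : V}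
    (hu : u ∈ Latt A ℓ p k) (hv : v ∈ LattM A ℓ p j) : ¬ A u v := fun huv =>
  hfree <| hasInducedCopy_A4vec hA (hp.2.2 j (by omega) hjℓ) hv.2 huv
    (mt Adj.symm (hv.1.2.2 (j + 1) (by omega) hjℓ))
    (mt Adj.symm (hu.2.2 (j + 1) (by omega) hjℓ))
    (mt Adj.symm (hu.2.2 j hkj hjℓ.le))

end

theorem dichi_Wp_Wa_general {V : Type*} [Fintype V]
    (A : V → V → Prop) (hA : Oriented A)
    (ℓ : ℕ) (p : ℕ → V) (hp : IsDirPath A ℓ p)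
    (γ : ℕ) (hγ : ∀ i, 1 ≤ i → i ≤ ℓ → dichi A (nbr A (p i)) ≤ γ) :
    (Free A P4vec → dichi A (Wp A ℓ p) ≤ 2 * γ) ∧
      (Free A A4vec → dichi A (Wa A ℓ p) ≤ 2 * γ) := by
  have hN : ∀ i ∈ Set.Icc 2 (ℓ - 1), ∀ T ⊆ nbr A (p i), DicolorableOn A T γ :=
    fun i ⟨hi, hiℓ⟩ _ hT => (dicolorableOn_of_dichi_le hA (hγ i (by omega) (by omega))).subset hT
  refine ⟨fun hfree => Nat.sInf_le (DicolorableOn.union ?_ ?_),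
    fun hfree => Nat.sInf_le (DicolorableOn.union ?_ ?_)⟩
  · refine dicolorableOn_biUnion (fun i hi => hN i hi _ fun v hv => Fatt_subset_nbr i hv.1) ?_
    rintro i ⟨hi, hiℓ⟩ j - hij u hu v hv
    exact not_arc_of_mem_FattM_of_mem_Fatt hA hp hfree hi (by omega) hij hu hv.1
  · refine dicolorableOn_biUnion (fun i hi => hN i hi _ fun v hv => Latt_subset_nbr i hv.1) ?_
    rintro i - j ⟨-, hjℓ⟩ hij u hu v hv
    exact not_arc_of_mem_Latt_of_mem_LattP hA hp hfree hij (by omega) hu.1 hv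
  · refine dicolorableOn_biUnion (fun i hi => hN i hi _ fun v hv => Fatt_subset_nbr i hv.1) ?_
    rintro i ⟨hi, hiℓ⟩ j - hij u hu v hv
    exact not_arc_of_mem_FattP_of_mem_Fatt hA hp hfree hi (by omega) hij hu hv.1
  · refine dicolorableOn_biUnion (fun i hi => hN i hi _ fun v hv => Latt_subset_nbr i hv.1) ?_
    rintro i - j ⟨-, hjℓ⟩ hij u hu v hv
    exact not_arc_of_mem_Latt_of_mem_LattM hA hp hfree hij (by omega) hu.1 hv

/-- for a forward-induced directed path with `χ⃗(N(v)) ≤ γ` on its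
vertices: if `D` is `P⃗4`-free then `χ⃗(W^p) ≤ 2γ`, and if `D` is `A⃗4`-free then
`χ⃗(W^a) ≤ 2γ`. -/
theorem dichi_Wp_Wa {V : Type*} [Fintype V]
    (A : V → V → Prop) (hA : Oriented A)
    (ℓ : ℕ) (p : ℕ → V) (hp : IsDirPath A ℓ p) (hfi : ForwardInduced A ℓ p)
    (γ : ℕ) (hγ : ∀ i, 1 ≤ i → i ≤ ℓ → dichi A (nbr A (p i)) ≤ γ) :
    (Free A P4vec → dichi A (Wp A ℓ p) ≤ 2 * γ) ∧
      (Free A A4vec → dichi A (Wa A ℓ p) ≤ 2 * γ) :=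
  dichi_Wp_Wa_general A hA ℓ p hp γ hγ

end DichiP4
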